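/- Let A be a self-adjoint negative operator on a Hilbert space H with compact resolvent, orthonormal eigenbasis (φ_j) and eigenvalues λ_j → −∞. Let μ > 0, N such that λ_{N+1} + μ < 0, let P_1,...,P_N ∈ H, and let K_1,...,K_N: H → ℝ be the bounded functionals K_i g = Σ_{k=1}^N l_{ik} ⟨g, φ_k⟩ for a real matrix L = (l_{ik}). If the N×N matrix Λ_N + F_N L is Hurwitz, where Λ_N = diag(λ_1+μ,...,λ_N+μ) and F_N has entries f_{ki} = ⟨P_i, φ_k⟩, then every eigenvalue of the operator A + μ + Σ_{i=1}^N P_i K_i has negative real part. -/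

import Mathlib

/-!
Let `z` be an eigenvalue with eigenvector `g`, and pair the eigen-equation with each mode `φ j`.
Since `⟨φ j, A g⟩ = λ_j ⟨φ j, g⟩`, the first `N` coordinates `v` of `g` satisfy
`(Λ_N + F_N L) v = z v`. If `v ≠ 0`, then `z` is an eigenvalue of the Hurwitz matrix. If `v = 0`,
the feedback term vanishes, so `(λ_j + μ) ⟨φ j, g⟩ = z ⟨φ j, g⟩` for every `j`; as the modes span
a dense subspace and `g ≠ 0`, some mode `j ≥ N` is nonzero, whence `z = λ_j + μ ≤ λ_N + μ < 0`.
-/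

open Matrix

namespace Matrix

theorem mem_spectrum_of_mulVec_eq_smul {n K : Type*} [Fintype n] [DecidableEq n] [Field K]
    {M : Matrix n n K} {v : n → K} {z : K} (hv : v ≠ 0) (hMv : M *ᵥ v = z • v) :
    z ∈ spectrum K M := by
  rw [← spectrum_toLin']
  exact Module.End.hasEigenvalue_iff_mem_spectrum.mp <|
    Module.End.hasEigenvalue_of_hasEigenvector
      ⟨Module.End.mem_eigenspace_iff.mpr (by rw [toLin'_apply, hMv]), hv⟩

theorem map_diagonal_add_mul_mulVec {n R S : Type*} [Fintype n] [DecidableEq n]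
    [CommSemiring R] [CommSemiring S] (f : R →+* S) (d : n → R) (F L : Matrix n n R) (v : n → S) :
    (diagonal d + F * L).map f *ᵥ v = (fun k => f (d k) * v k) + F.map f *ᵥ (L.map f *ᵥ v) := by
  rw [Matrix.map_add f (map_add f), Matrix.map_mul, diagonal_map (map_zero f), add_mulVec,
    ← mulVec_mulVec]
  congr 1
  ext k
  exact mulVec_diagonal _ v k

end Matrix

section

variable {H : Type*} [NormedAddCommGroup H] [InnerProductSpace ℂ H]

theorem exists_inner_ne_zero_of_topologicalClosure_span_eq_top {ι : Type*} {φ : ι → H}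
    (hφ : (Submodule.span ℂ (Set.range φ)).topologicalClosure = ⊤) {g : H} (hg : g ≠ 0) :
    ∃ j, inner ℂ (φ j) g ≠ 0 := by
  by_contra! h
  refine hg ((Submodule.dense_iff_topologicalClosure_eq_top.mpr hφ).eq_zero_of_inner_right ℂ ?_)
  intro u hu
  induction hu using Submodule.span_induction with
  | mem x hx => obtain ⟨j, rfl⟩ := hx; exact h j
  | zero => exact inner_zero_left g
  | add x y _ _ hx hy => rw [inner_add_left, hx, hy, add_zero]
  | smul c x _ hx => rw [inner_smul_left, hx, mul_zero]

theorem inner_eq_of_add_smul_add_sum_smul_eq_smul {κ : Type*} [Fintype κ]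
    {v g Ag : H} {P : κ → H} {a μ z : ℂ} {c : κ → ℂ}
    (hA : inner ℂ v Ag = a * inner ℂ v g) (heq : Ag + μ • g + ∑ i, c i • P i = z • g) :
    (a + μ) * inner ℂ v g + ∑ i, c i * inner ℂ v (P i) = z * inner ℂ v g := by
  have := congrArg (inner ℂ v) heq
  simp only [inner_add_right, inner_smul_right, inner_sum, hA] at this
  linear_combination this

end

theorem stmt8_general {H : Type*} [NormedAddCommGroup H] [InnerProductSpace ℂ H]
    (φ : ℕ → H)
    (hcomplete : (Submodule.span ℂ (Set.range φ)).topologicalClosure = ⊤)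
    (lam : ℕ → ℝ) (hanti : Antitone lam)
    (μ : ℝ) (N : ℕ) (hN : lam N + μ < 0)
    (P : Fin N → H) (L : Matrix (Fin N) (Fin N) ℝ)
    (D : Set H) (A : H → H)
    (hsym : ∀ g ∈ D, ∀ j : ℕ,
      (inner ℂ (φ j) (A g) : ℂ) = (lam j : ℂ) * (inner ℂ (φ j) g : ℂ))
    (F : Matrix (Fin N) (Fin N) ℝ)
    (hF : ∀ k i : Fin N, (inner ℂ (φ (k : ℕ)) (P i) : ℂ) = (F k i : ℂ))
    (hHurwitz : ∀ z ∈ spectrum ℂ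
        (((Matrix.diagonal fun k : Fin N => lam (k : ℕ) + μ) + F * L).map
          (Complex.ofReal ·)), z.re < 0) :
    ∀ (lamEig : ℂ) (g : H), g ∈ D → g ≠ 0 →
      A g + (μ : ℂ) • g +
        (∑ i : Fin N,
          (∑ k : Fin N, (L i k : ℂ) * (inner ℂ (φ (k : ℕ)) g : ℂ)) • P i)
        = lamEig • g →
      lamEig.re < 0 := by
  intro z g hgD hg0 heq
  set v : Fin N → ℂ := fun k => inner ℂ (φ k) g
  have hmode (j : ℕ) : ((lam j : ℂ) + μ) * inner ℂ (φ j) g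
      + ∑ i, (L.map Complex.ofReal *ᵥ v) i * inner ℂ (φ j) (P i) = z * inner ℂ (φ j) g :=
    inner_eq_of_add_smul_add_sum_smul_eq_smul (hsym g hgD j) heq
  by_cases hv : v = 0
  · obtain ⟨j, hj⟩ := exists_inner_ne_zero_of_topologicalClosure_span_eq_top hcomplete hg0
    have hNj : N ≤ j := by
      by_contra! hjN
      exact hj (congrFun hv ⟨j, hjN⟩)
    have hz : z = lam j + μ := by
      refine (mul_right_cancel₀ hj ?_).symm
      simpa [hv] using hmode j
    rw [hz]
    simpa using (add_le_add_left (hanti hNj) μ).trans_lt hN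
  · refine hHurwitz z (mem_spectrum_of_mulVec_eq_smul hv ?_)
    rw [show (fun x : ℝ => (x : ℂ)) = Complex.ofRealHom from rfl,
      map_diagonal_add_mul_mulVec]
    ext k
    rw [Pi.add_apply, Pi.smul_apply, smul_eq_mul, ← hmode k]
    congr 1
    · simp [v]
    · simp only [mulVec, dotProduct, map_apply, hF, Complex.ofRealHom_eq_coe]
      exact Finset.sum_congr rfl fun i _ => mul_comm _ _

/-- Spectral estimate for the feedback-compensated operator
`A + μ + Σᵢ Pᵢ Kᵢ`, where `Kᵢ g = Σₖ l_{ik} ⟨g, φₖ⟩`.  Here `A` is a negative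
self-adjoint operator with compact resolvent, orthonormal eigenbasis `(φ_j)_{j∈ℕ}`
(0-indexed: the first `N` modes are `j < N`) and decreasing eigenvalues
`λ_j → -∞`; `μ > 0` satisfies `λ_{N+1} + μ < 0` (i.e. `lam N + μ < 0` in 0-indexing).
Self-adjointness of `A` on its domain `D` is encoded by
`⟨φ_j, A g⟩ = λ_j ⟨φ_j, g⟩`, and `F` has entries `f_{ki} = ⟨P_i, φ_k⟩`.
If `Λ_N + F_N L` is Hurwitz, then every eigenvalue `λ` of `A + μ + Σᵢ Pᵢ Kᵢ`
satisfies `Re λ < 0`. -/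
theorem stmt8 {H : Type*} [NormedAddCommGroup H] [InnerProductSpace ℂ H]
    [CompleteSpace H]
    (φ : ℕ → H) (hON : Orthonormal ℂ φ)
    (hcomplete : (Submodule.span ℂ (Set.range φ)).topologicalClosure = ⊤)
    (lam : ℕ → ℝ) (hanti : Antitone lam) (hneg : ∀ j : ℕ, lam j < 0)
    (htend : Filter.Tendsto lam Filter.atTop Filter.atBot)
    (μ : ℝ) (hμ : 0 < μ) (N : ℕ) (hN : lam N + μ < 0)
    (P : Fin N → H) (L : Matrix (Fin N) (Fin N) ℝ)
    (D : Set H) (A : H → H) (hφD : ∀ j : ℕ, φ j ∈ D)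
    (hsym : ∀ g ∈ D, ∀ j : ℕ,
      (inner ℂ (φ j) (A g) : ℂ) = (lam j : ℂ) * (inner ℂ (φ j) g : ℂ))
    (F : Matrix (Fin N) (Fin N) ℝ)
    (hF : ∀ k i : Fin N, (inner ℂ (φ (k : ℕ)) (P i) : ℂ) = (F k i : ℂ))
    (hHurwitz : ∀ z ∈ spectrum ℂ
        (((Matrix.diagonal fun k : Fin N => lam (k : ℕ) + μ) + F * L).map
          (Complex.ofReal ·)), z.re < 0) :
    ∀ (lamEig : ℂ) (g : H), g ∈ D → g ≠ 0 →
      A g + (μ : ℂ) • g +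
        (∑ i : Fin N,
          (∑ k : Fin N, (L i k : ℂ) * (inner ℂ (φ (k : ℕ)) g : ℂ)) • P i)
        = lamEig • g →
      lamEig.re < 0 :=
  stmt8_general φ hcomplete lam hanti μ N hN P L D A hsym F hF hHurwitz
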